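/- Let P : E → E be a linear map (not assumed continuous), and write P − z₀ for the map f ↦ P f − z₀ f. Suppose that (i) for every z ∈ U \ {z₀} and every f ∈ E one has both P(R(z)f) − z·(R(z)f) = f and R(z)(P f − z f) = f, and (ii) for every f ∈ E the map z ↦ P(H(z)f) is bounded on some neighborhood of z₀ in U. Then each Laurent coefficient commutes with P − z₀: for every 1 ≤ j ≤ k and every f ∈ E, A₋ⱼ(P f − z₀ f) = P(A₋ⱼ f) − z₀·(A₋ⱼ f). In particular A₋₁ commutes with P − z₀. -/

import Mathlib

/-! For `z ≠ z₀` near `z₀`, `R z` is a two-sided inverse of `P - z`, hence commutes with `P - z₀`.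
Inserting the Laurent expansion, the principal part with coefficients
`A j (P f - z₀ f) - (P - z₀) (A j f)` equals `(P - z₀) (H z f) - H z (P f - z₀ f)`, which stays
bounded as `z → z₀`. A bounded principal part vanishes: multiplied by `(z - z₀) ^ m` it tends both
to its top coefficient and to `0`, and one descends on `m`. -/

open Filter Topology Asymptotics Finset

section PrincipalPart

variable {𝕜 E : Type*} [NontriviallyNormedField 𝕜] [NormedAddCommGroup E] [NormedSpace 𝕜 E]

def principalPart (z₀ : 𝕜) (c : ℕ → E) (m : ℕ) (z : 𝕜) : E :=
  ∑ j ∈ Icc 1 m, (z - z₀) ^ (-(j : ℤ)) • c j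

theorem tendsto_sub_pow_smul_principalPart (z₀ : 𝕜) (c : ℕ → E) {m : ℕ} (hm : 1 ≤ m) :
    Tendsto (fun z => (z - z₀) ^ m • principalPart z₀ c m z) (𝓝[≠] z₀) (𝓝 (c m)) := by
  set p : 𝕜 → E := fun z => ∑ j ∈ Icc 1 m, (z - z₀) ^ (m - j) • c j
  have hp : Tendsto p (𝓝 z₀) (𝓝 (c m)) := by
    have hpz₀ : p z₀ = c m := by
      simp only [p]
      rw [Finset.sum_eq_single_of_mem m (by simp [hm])]
      · simp
      · intro j hj hne
        rw [sub_self, zero_pow (by grind), zero_smul]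
    exact hpz₀ ▸ (by fun_prop : Continuous p).tendsto z₀
  refine (hp.mono_left nhdsWithin_le_nhds).congr' ?_
  filter_upwards [self_mem_nhdsWithin] with z hz
  rw [principalPart, Finset.smul_sum]
  refine Finset.sum_congr rfl fun j hj => ?_
  rw [smul_smul, ← zpow_natCast, ← zpow_natCast, ← zpow_add₀ (sub_ne_zero.mpr hz),
    Nat.cast_sub (Finset.mem_Icc.mp hj).2, ← sub_eq_add_neg]

theorem eq_zero_of_principalPart_isBigO_one (z₀ : 𝕜) (c : ℕ → E) (m : ℕ)
    (h : principalPart z₀ c m =O[𝓝[≠] z₀] (fun _ => (1 : ℝ))) :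
    ∀ j, 1 ≤ j → j ≤ m → c j = 0 := by
  induction m with
  | zero => intro j h1 h2; omega
  | succ m ih =>
    have htop : c (m + 1) = 0 := by
      have hpow : Tendsto (fun z => (z - z₀) ^ (m + 1)) (𝓝[≠] z₀) (𝓝 0) :=
        (Continuous.tendsto' (by fun_prop) _ _ (by simp)).mono_left nhdsWithin_le_nhds
      exact tendsto_nhds_unique (tendsto_sub_pow_smul_principalPart z₀ c (by omega))
        (hpow.zero_smul_isBoundedUnder_le ((isBigO_one_iff ℝ).mp h))
    have hsucc : principalPart z₀ c (m + 1) = principalPart z₀ c m := by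
      funext z
      rw [principalPart, Finset.sum_Icc_succ_top (by omega), htop, smul_zero, add_zero]
      rfl
    intro j hj hjm
    rcases Nat.lt_or_eq_of_le hjm with hlt | rfl
    · exact ih (hsucc ▸ h) j hj (by omega)
    · exact htop

end PrincipalPart

theorem map_sub_smul_eq_of_isInverse_sub_smul {R M F : Type*} [CommRing R] [AddCommGroup M]
    [Module R M] [FunLike F M M] [LinearMapClass F R M M] (P : M →ₗ[R] M) (T : F) {z : R}
    (hright : ∀ f, P (T f) - z • T f = f) (hleft : ∀ f, T (P f - z • f) = f) (z₀ : R) (f : M) :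
    T (P f - z₀ • f) = P (T f) - z₀ • T f := by
  calc T (P f - z₀ • f) = T (P f - z • f) + (z - z₀) • T f := by
        rw [← map_smul, ← map_add]; congr 1; module
    _ = P (T f) - z • T f + (z - z₀) • T f := by rw [hleft, hright]
    _ = P (T f) - z₀ • T f := by module

theorem stmt_1_general
    {E : Type*} [NormedAddCommGroup E] [NormedSpace ℂ E]
    (z₀ : ℂ) (k : ℕ)
    (U : Set ℂ) (hU : IsOpen U) (hz₀ : z₀ ∈ U)
    (A : ℕ → (E →L[ℂ] E)) (H : ℂ → (E →L[ℂ] E))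
    (hH : AnalyticOnNhd ℂ H U)
    (R : ℂ → (E →L[ℂ] E))
    (hR : ∀ z ∈ U \ {z₀},
      R z = (∑ j ∈ Finset.Icc 1 k, (z - z₀) ^ (-(j : ℤ)) • A j) + H z)
    (P : E →ₗ[ℂ] E)
    (hres : ∀ z ∈ U \ {z₀}, ∀ f : E,
      P (R z f) - z • R z f = f ∧ R z (P f - z • f) = f)
    (hbdd : ∀ f : E, ∃ V ∈ 𝓝 z₀, ∃ C : ℝ, ∀ z ∈ V ∩ U, ‖P (H z f)‖ ≤ C) :
    ∀ j : ℕ, 1 ≤ j → j ≤ k → ∀ f : E,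
      A j (P f - z₀ • f) = P (A j f) - z₀ • A j f := by
  intro j hj hjk f
  set g := P f - z₀ • f
  set c : ℕ → E := fun i => A i g - (P (A i f) - z₀ • A i f)
  have hprincipal : ∀ z ∈ U \ {z₀},
      principalPart z₀ c k z = P (H z f) - z₀ • H z f - H z g := by
    intro z hz
    have hcomm := map_sub_smul_eq_of_isInverse_sub_smul P (R z) (fun f => (hres z hz f).1)
      (fun f => (hres z hz f).2) z₀ f
    simp only [hR z hz, add_apply, FunLike.coe_sum, Finset.sum_apply, smul_apply, map_add,
      map_sum, map_smul, smul_add, Finset.smul_sum, smul_comm z₀] at hcomm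
    simp only [principalPart, c, g, smul_sub, Finset.sum_sub_distrib]
    linear_combination (norm := module) hcomm
  have hbounded : (fun z => P (H z f) - z₀ • H z f - H z g) =O[𝓝 z₀] (fun _ => (1 : ℝ)) := by
    obtain ⟨V, hV, C, hC⟩ := hbdd f
    have hPHf : (fun z => P (H z f)) =O[𝓝 z₀] (fun _ => (1 : ℝ)) := by
      refine (isBigO_one_iff ℝ).mpr (isBoundedUnder_of_eventually_le (a := C) ?_)
      filter_upwards [hV, hU.mem_nhds hz₀] with z hzV hzU using hC z ⟨hzV, hzU⟩
    have hHv : ∀ v : E, (fun z => H z v) =O[𝓝 z₀] (fun _ => (1 : ℝ)) := fun v =>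
      ((hH z₀ hz₀).continuousAt.clm_apply continuousAt_const).tendsto.isBigO_one ℝ
    exact (hPHf.sub ((hHv f).const_smul_left z₀)).sub (hHv g)
  have hprincipal_eq : (fun z => P (H z f) - z₀ • H z f - H z g) =ᶠ[𝓝[≠] z₀]
      principalPart z₀ c k := by
    filter_upwards [sdiff_mem_nhdsWithin_compl (hU.mem_nhds hz₀) {z₀}] with z hz
    exact (hprincipal z hz).symm
  exact sub_eq_zero.mp <| eq_zero_of_principalPart_isBigO_one z₀ c k
    ((hbounded.mono nhdsWithin_le_nhds).congr' hprincipal_eq EventuallyEq.rfl) j hj hjk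

/-- the Laurent coefficients of a meromorphically continued resolvent at a
resonance `z₀` commute with `P - z₀` (Banach-space abstraction of Proposition 2.2). -/
theorem stmt_1
    {E : Type*} [NormedAddCommGroup E] [NormedSpace ℂ E] [CompleteSpace E]
    (z₀ : ℂ) (k : ℕ) (hk : 1 ≤ k)
    (U : Set ℂ) (hU : IsOpen U) (hz₀ : z₀ ∈ U)
    (A : ℕ → (E →L[ℂ] E)) (H : ℂ → (E →L[ℂ] E))
    (hH : AnalyticOnNhd ℂ H U)
    (R : ℂ → (E →L[ℂ] E))
    (hR : ∀ z ∈ U \ {z₀},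
      R z = (∑ j ∈ Finset.Icc 1 k, (z - z₀) ^ (-(j : ℤ)) • A j) + H z)
    (P : E →ₗ[ℂ] E)
    (hres : ∀ z ∈ U \ {z₀}, ∀ f : E,
      P (R z f) - z • R z f = f ∧ R z (P f - z • f) = f)
    (hbdd : ∀ f : E, ∃ V ∈ 𝓝 z₀, ∃ C : ℝ, ∀ z ∈ V ∩ U, ‖P (H z f)‖ ≤ C) :
    ∀ j : ℕ, 1 ≤ j → j ≤ k → ∀ f : E,
      A j (P f - z₀ • f) = P (A j f) - z₀ • A j f :=
  stmt_1_general z₀ k U hU hz₀ A H hH R hR P hres hbdd
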